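/- arXiv:1107.4183 — 2 statements merged into one kernel-verified Lean document; each statement's English description precedes it below -/
import Mathlib

section
/- Let N ≥ 1. The N+1 elements 1, C̃_1, C̃_1², …, C̃_1^N are linearly independent over ℂ in Cl(N) ⊗ Cl(N). (Hence, together with the identity P_{N+1}(N, C̃_1) = 0, the polynomial P_{N+1}(N, x) is the minimal polynomial of C̃_1; proof of Proposition 1.4.) -/
/-!
The elements `a_i = e_i ⊗ e_i` pairwise commute and square to `1`, so for every sign
vector `ε ∈ {±1}^N` the product `v_ε = ∏ (1 + ε_i a_i)` satisfies `C̃_1 v_ε = (∑ ε_i) v_ε`.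
Sign vectors with `k` entries `-1`, `k = 0, …, N`, give the `N + 1` distinct eigenvalues
`N - 2k`. Each `v_ε` is nonzero: its scalar part (transported from the exterior algebra
through `Cl(N) ≃ Λℂ^N`, and tensored with itself) is `1`, since every other monomial of the
expansion is a product of distinct orthogonal generators. Applying a vanishing combination
`∑ g_i C̃_1^i` to the `v_ε` gives `∑ g_i (N - 2k)^i = 0` for all `k`, and the Vandermonde
determinant forces `g = 0`.
-/

noncomputable section

open scoped TensorProduct

/-- The quadratic form `Q(x) = x_1^2 + ⋯ + x_M^2` on `ℂ^M`. -/
def Qform (M : ℕ) : QuadraticForm ℂ (Fin M → ℂ) :=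
  QuadraticMap.weightedSumSquares ℂ (fun _ : Fin M => (1 : ℂ))

/-- The Clifford algebra `Cl(M)`. -/
abbrev Cl (M : ℕ) := CliffordAlgebra (Qform M)

/-- The generator `e_i` for `i : Fin M`. -/
def gen (M : ℕ) (i : Fin M) : Cl M :=
  CliffordAlgebra.ι (Qform M) (Pi.single i 1)

/-- `C̃_1 = ∑_{i=1}^N e_i ⊗ e_i ∈ Cl(N) ⊗ Cl(N)`. -/
def Ct1 (N : ℕ) : Cl N ⊗[ℂ] Cl N :=
  ∑ i : Fin N, gen N i ⊗ₜ[ℂ] gen N i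

section Eigenvectors

variable {K A : Type*} [Field K] [Ring A] [Algebra K A]

theorem pow_mul_eq_smul_of_mul_eq_smul {x v : A} {μ : K} (h : x * v = μ • v) (m : ℕ) :
    x ^ m * v = μ ^ m • v := by
  induction m with
  | zero => simp
  | succ m ih => rw [pow_succ', mul_assoc, ih, mul_smul_comm, h, smul_smul, pow_succ]

theorem linearIndependent_pow_of_eigenvectors {n : ℕ} (x : A) (μ : Fin n → K)
    (hμ : Function.Injective μ) (v : Fin n → A) (hv : ∀ k, v k ≠ 0)
    (hxv : ∀ k, x * v k = μ k • v k) :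
    LinearIndependent K (fun i : Fin n => x ^ (i : ℕ)) := by
  rw [Fintype.linearIndependent_iff]
  intro g hg
  refine congrFun (Matrix.eq_zero_of_forall_index_sum_mul_pow_eq_zero hμ fun k => ?_)
  have hk : (∑ i, g i * μ k ^ (i : ℕ)) • v k = 0 := by
    simp_rw [Finset.sum_smul, mul_smul, ← pow_mul_eq_smul_of_mul_eq_smul (hxv k),
      ← smul_mul_assoc, ← Finset.sum_mul, hg, zero_mul]
  exact (smul_eq_zero.mp hk).resolve_right (hv k)

end Eigenvectors

section CommutingInvolutions

variable {K A ι : Type*} [CommRing K] [Ring A] [Algebra K A] (a : ι → A) (ε : ι → K)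

def prodOneAddSmul (l : List ι) : A := (l.map fun i => 1 + ε i • a i).prod

theorem prodOneAddSmul_cons (i : ι) (l : List ι) :
    prodOneAddSmul a ε (i :: l) = (1 + ε i • a i) * prodOneAddSmul a ε l :=
  List.prod_cons

variable {a ε}

theorem mul_one_add_smul_self {x : A} {c : K} (hx : x * x = 1) (hc : c * c = 1) :
    x * (1 + c • x) = c • (1 + c • x) := by
  rw [mul_add, mul_one, mul_smul_comm, hx, smul_add, smul_smul, hc, one_smul, add_comm]

theorem mul_prodOneAddSmul_of_mem (hcomm : Pairwise fun i j => Commute (a i) (a j))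
    (ha : ∀ i, a i * a i = 1) (hε : ∀ i, ε i * ε i = 1) {i : ι} {l : List ι} (hi : i ∈ l) :
    a i * prodOneAddSmul a ε l = ε i • prodOneAddSmul a ε l := by
  induction l with
  | nil => simp at hi
  | cons j l ih =>
    rw [prodOneAddSmul_cons, ← mul_assoc]
    rcases eq_or_ne i j with rfl | hij
    · rw [mul_one_add_smul_self (ha i) (hε i), smul_mul_assoc]
    · have hcomm' : Commute (a i) (1 + ε j • a j) :=
        (Commute.one_right _).add_right ((hcomm hij).smul_right _)
      rw [hcomm'.eq, mul_assoc, ih (List.mem_of_ne_of_mem hij hi), mul_smul_comm]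

theorem sum_mul_prodOneAddSmul [Fintype ι] (hcomm : Pairwise fun i j => Commute (a i) (a j))
    (ha : ∀ i, a i * a i = 1) (hε : ∀ i, ε i * ε i = 1) {l : List ι} (hl : ∀ i, i ∈ l) :
    (∑ i, a i) * prodOneAddSmul a ε l = (∑ i, ε i) • prodOneAddSmul a ε l := by
  rw [Finset.sum_mul, Finset.sum_smul]
  exact Finset.sum_congr rfl fun i _ => mul_prodOneAddSmul_of_mem hcomm ha hε (hl i)

end CommutingInvolutions

namespace CliffordAlgebra

variable {R M : Type*} [CommRing R] [Invertible (2 : R)] [AddCommGroup M] [Module R M]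
  (Q : QuadraticForm R M)

def scalarPart : CliffordAlgebra Q →ₗ[R] R :=
  ExteriorAlgebra.algebraMapInv.toLinearMap ∘ₗ (equivExterior Q).toLinearMap

theorem scalarPart_one : scalarPart Q 1 = 1 := by
  simp [scalarPart]

variable {Q}

theorem associated_neg_apply_eq_zero_of_isOrtho {v w : M} (h : Q.IsOrtho v w) :
    QuadraticMap.associated (-Q) v w = 0 := by
  simp [QuadraticMap.associated_apply, QuadraticMap.isOrtho_def.mp h]

theorem contractLeft_changeForm_prod_eq_zero {v : M} {vs : List M}
    (hvs : vs.Pairwise Q.IsOrtho) (hv : ∀ w ∈ vs, Q.IsOrtho v w) :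
    contractLeft (QuadraticMap.associated (-Q) v)
      (changeForm changeForm.associated_neg_proof (vs.map (ι Q)).prod) = 0 := by
  induction vs generalizing v with
  | nil => simp
  | cons w vs ih =>
    obtain ⟨hw, hvs⟩ := List.pairwise_cons.mp hvs
    rw [List.map_cons, List.prod_cons, changeForm_ι_mul, ih hvs hw, sub_zero,
      contractLeft_ι_mul, ih hvs fun u hu => hv u (List.mem_cons_of_mem w hu), mul_zero,
      sub_zero, associated_neg_apply_eq_zero_of_isOrtho (hv w List.mem_cons_self), zero_smul]

theorem scalarPart_prod_eq_zero {vs : List M} (hne : vs ≠ []) (hvs : vs.Pairwise Q.IsOrtho) :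
    scalarPart Q (vs.map (ι Q)).prod = 0 := by
  obtain ⟨v, vs, rfl⟩ := List.exists_cons_of_ne_nil hne
  obtain ⟨hv, hvs⟩ := List.pairwise_cons.mp hvs
  rw [List.map_cons, List.prod_cons, scalarPart, LinearMap.comp_apply, LinearEquiv.coe_coe,
    equivExterior, changeFormEquiv_apply, changeForm_ι_mul,
    contractLeft_changeForm_prod_eq_zero hvs hv, sub_zero, AlgHom.toLinearMap_apply, map_mul]
  simp [ExteriorAlgebra.algebraMapInv]

end CliffordAlgebra

theorem Qform_single (M : ℕ) (i : Fin M) : Qform M (Pi.single i 1) = 1 := by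
  simp [Qform, QuadraticMap.weightedSumSquares_apply, Pi.single_apply]

theorem Qform_isOrtho_single {M : ℕ} {i j : Fin M} (h : i ≠ j) :
    (Qform M).IsOrtho (Pi.single i 1) (Pi.single j 1) := by
  rw [QuadraticMap.isOrtho_def, Qform_single, Qform_single]
  simp [Qform, QuadraticMap.weightedSumSquares_apply, Pi.single_apply, mul_add,
    Finset.sum_add_distrib, h, h.symm]

open CliffordAlgebra

theorem gen_mul_self (M : ℕ) (i : Fin M) : gen M i * gen M i = 1 := by
  rw [gen, ι_sq_scalar, Qform_single, map_one]

theorem gen_mul_gen_of_ne {M : ℕ} {i j : Fin M} (h : i ≠ j) :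
    gen M i * gen M j = -(gen M j * gen M i) :=
  ι_mul_ι_comm_of_isOrtho (Qform_isOrtho_single h)

theorem scalarPart_prod_gen {M : ℕ} {t : List (Fin M)} (hne : t ≠ []) (ht : t.Nodup) :
    scalarPart (Qform M) (t.map (gen M)).prod = 0 := by
  have hortho : (t.map (Pi.single · 1)).Pairwise (Qform M).IsOrtho :=
    List.pairwise_map.mpr (ht.imp Qform_isOrtho_single)
  have hgen : t.map (gen M) = (t.map (Pi.single · 1)).map (ι (Qform M)) := by
    simp [List.map_map, Function.comp_def, gen]
  rw [hgen]
  exact scalarPart_prod_eq_zero (List.map_eq_nil_iff.not.mpr hne) hortho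

def genTmul (N : ℕ) (i : Fin N) : Cl N ⊗[ℂ] Cl N := gen N i ⊗ₜ[ℂ] gen N i

theorem genTmul_mul_self (N : ℕ) (i : Fin N) : genTmul N i * genTmul N i = 1 := by
  rw [genTmul, Algebra.TensorProduct.tmul_mul_tmul, gen_mul_self,
    Algebra.TensorProduct.one_def]

theorem pairwise_commute_genTmul (N : ℕ) :
    Pairwise fun i j => Commute (genTmul N i) (genTmul N j) := by
  intro i j h
  change genTmul N i * genTmul N j = genTmul N j * genTmul N i
  rw [genTmul, genTmul, Algebra.TensorProduct.tmul_mul_tmul, Algebra.TensorProduct.tmul_mul_tmul,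
    gen_mul_gen_of_ne h, TensorProduct.neg_tmul, TensorProduct.tmul_neg, neg_neg]

def tensorScalarPart (N : ℕ) : Cl N ⊗[ℂ] Cl N →ₗ[ℂ] ℂ :=
  LinearMap.mul' ℂ ℂ ∘ₗ TensorProduct.map (scalarPart (Qform N)) (scalarPart (Qform N))

theorem tensorScalarPart_tmul (N : ℕ) (x y : Cl N) :
    tensorScalarPart N (x ⊗ₜ[ℂ] y) = scalarPart (Qform N) x * scalarPart (Qform N) y := by
  simp [tensorScalarPart]

theorem tensorScalarPart_prod_tmul_mul_prodOneAddSmul {N : ℕ} (ε : Fin N → ℂ)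
    {l : List (Fin N)} (hl : l.Nodup) {t : List (Fin N)} (ht : t.Nodup) (htl : ∀ i ∈ t, i ∉ l) :
    tensorScalarPart N (((t.map (gen N)).prod ⊗ₜ[ℂ] (t.map (gen N)).prod) *
      prodOneAddSmul (genTmul N) ε l) = if t = [] then 1 else 0 := by
  induction l generalizing t with
  | nil =>
    rw [prodOneAddSmul, List.map_nil, List.prod_nil, mul_one, tensorScalarPart_tmul]
    rcases eq_or_ne t [] with rfl | hne
    · simp [scalarPart_one]
    · rw [scalarPart_prod_gen hne ht, zero_mul, if_neg hne]
  | cons i l ih =>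
    obtain ⟨hil, hl⟩ := List.nodup_cons.mp hl
    have hti : (t ++ [i]).Nodup :=
      List.nodup_append.mpr ⟨ht, List.nodup_singleton i, by grind⟩
    have htil : ∀ j ∈ t ++ [i], j ∉ l := by grind
    have hprod : ((t.map (gen N)).prod ⊗ₜ[ℂ] (t.map (gen N)).prod) * genTmul N i =
        ((t ++ [i]).map (gen N)).prod ⊗ₜ[ℂ] ((t ++ [i]).map (gen N)).prod := by
      simp [genTmul, Algebra.TensorProduct.tmul_mul_tmul]
    have htl' : ∀ j ∈ t, j ∉ l := fun j hj hjl => htl j hj (List.mem_cons_of_mem i hjl)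
    rw [prodOneAddSmul_cons, ← mul_assoc, mul_add, mul_one, mul_smul_comm, hprod, add_mul,
      smul_mul_assoc, map_add, map_smul, ih hl ht htl', ih hl hti htil]
    simp

theorem tensorScalarPart_prodOneAddSmul {N : ℕ} (ε : Fin N → ℂ) {l : List (Fin N)}
    (hl : l.Nodup) : tensorScalarPart N (prodOneAddSmul (genTmul N) ε l) = 1 := by
  simpa [← Algebra.TensorProduct.one_def] using
    tensorScalarPart_prod_tmul_mul_prodOneAddSmul ε hl List.nodup_nil (by simp)

theorem prodOneAddSmul_genTmul_ne_zero {N : ℕ} (ε : Fin N → ℂ) {l : List (Fin N)}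
    (hl : l.Nodup) : prodOneAddSmul (genTmul N) ε l ≠ 0 := fun h =>
  one_ne_zero ((tensorScalarPart_prodOneAddSmul ε hl).symm.trans (by rw [h, map_zero]))

def signs (N k : ℕ) (i : Fin N) : ℂ := if (i : ℕ) < k then -1 else 1

theorem signs_mul_self (N k : ℕ) (i : Fin N) : signs N k i * signs N k i = 1 := by
  unfold signs; split_ifs <;> norm_num

theorem sum_signs {N k : ℕ} (hk : k ≤ N) : ∑ i, signs N k i = N - 2 * k := by
  have hcard : (Finset.univ.filter fun i : Fin N => (i : ℕ) < k).card = k := by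
    rw [Fin.card_filter_val_lt, min_eq_right hk]
  simp only [signs, Finset.sum_ite, Finset.sum_const, Finset.filter_not, Finset.card_univ_sdiff,
    hcard, Fintype.card_fin, nsmul_eq_mul, Nat.cast_sub hk]
  ring

theorem Ct1_powers_linearIndependent_general (N : ℕ) :
    LinearIndependent ℂ (fun i : Fin (N + 1) => Ct1 N ^ (i : ℕ)) := by
  have hinj : Function.Injective fun k : Fin (N + 1) => (N - 2 * k : ℂ) :=
    fun k₁ k₂ h => Fin.ext (by simpa using h)
  refine linearIndependent_pow_of_eigenvectors (Ct1 N) _ hinj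
    (fun k => prodOneAddSmul (genTmul N) (signs N k) (List.finRange N))
    (fun k => prodOneAddSmul_genTmul_ne_zero _ (List.nodup_finRange N)) fun k => ?_
  rw [← sum_signs (Nat.lt_succ_iff.mp k.isLt)]
  exact sum_mul_prodOneAddSmul (pairwise_commute_genTmul N) (genTmul_mul_self N)
    (signs_mul_self N k) List.mem_finRange

/-- Proof of Proposition 1.4: the `N+1` elements `1, C̃_1, C̃_1², …, C̃_1^N` are
linearly independent over `ℂ` in `Cl(N) ⊗ Cl(N)`. -/
theorem Ct1_powers_linearIndependent (N : ℕ) (hN : 1 ≤ N) :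
    LinearIndependent ℂ (fun i : Fin (N + 1) => Ct1 N ^ (i : ℕ)) :=
  Ct1_powers_linearIndependent_general N
end
end

section
/- Let N ≥ 1 and suppose λ ∈ ℂ satisfies P_{N+1}(N, λ) = 0. Define x(λ) ∈ ℂ^{N+1} by x(λ)_s = (N−s)!·P_s(N, λ)/N! for 0 ≤ s ≤ N. Then (E − F)·x(λ) = λ·x(λ) and x(λ)_0 = 1; that is, x(λ) is the right eigenvector of E − F for the eigenvalue λ, normalized to have 0-th coordinate 1, and its coordinates are given by the polynomials P_s. (Lemma 1.6(b).) -/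
noncomputable section

/-- The matrix of `E` acting on the `(N+1)`-dimensional irreducible representation of
`sl₂`: `E·e_r = (N−r+1)·e_{r−1}`, i.e. `E_{r−1,r} = N−r+1` for `1 ≤ r ≤ N`. -/
def Emat (N : ℕ) : Matrix (Fin (N + 1)) (Fin (N + 1)) ℂ :=
  fun r c => if (c : ℕ) = (r : ℕ) + 1 then (N : ℂ) - (r : ℕ) else 0

/-- The matrix of `F`: `F·e_r = (r+1)·e_{r+1}`, i.e. `F_{r+1,r} = r+1` for `0 ≤ r ≤ N−1`. -/
def Fmat (N : ℕ) : Matrix (Fin (N + 1)) (Fin (N + 1)) ℂ :=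
  fun r c => if (r : ℕ) = (c : ℕ) + 1 then (r : ℕ) else 0

/-- The polynomials `P_m(N,x)`: `P_0 = 1`, `P_1 = x`,
`P_{m+1} = x·P_m + m(N+1−m)·P_{m−1}`. -/
def Ppoly (N : ℕ) : ℕ → Polynomial ℂ
  | 0 => 1
  | 1 => Polynomial.X
  | (m + 2) => Polynomial.X * Ppoly N (m + 1) +
      Polynomial.C (((m : ℂ) + 1) * ((N : ℂ) - m)) * Ppoly N m

/-!
Row `r` of `(E − F) x` is `(N − r) x_{r+1} − r x_{r−1}`. For `x_s = (N − s)! P_s(λ)` this is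
`(N − r)!` times `P_{r+1}(λ) − r(N + 1 − r) P_{r−1}(λ) = λ P_r(λ)`, the defining recurrence; in the
last row the term `x_{N+1}` is absent, which is exactly what `P_{N+1}(λ) = 0` accounts for.
-/

open Matrix Polynomial

section Matrices

variable {N : ℕ}

theorem Emat_mulVec_apply (v : ℕ → ℂ) (r : Fin (N + 1)) :
    (Emat N *ᵥ fun s => v s) r = ((N : ℂ) - r) * v (r + 1) := by
  simp only [Matrix.mulVec, dotProduct, Emat, ite_mul, zero_mul]
  rw [Fin.sum_univ_eq_sum_range (fun c => if c = (r : ℕ) + 1 then ((N : ℂ) - r) * v c else 0),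
    Finset.sum_ite_eq']
  split_ifs with h
  · rfl
  · have hr : (r : ℕ) = N := by simp at h; omega
    simp [hr]

theorem Fmat_mulVec_apply (v : ℕ → ℂ) (r : Fin (N + 1)) :
    (Fmat N *ᵥ fun s => v s) r = (r : ℂ) * v (r - 1) := by
  simp only [Matrix.mulVec, dotProduct, Fmat, ite_mul, zero_mul]
  rw [Fin.sum_univ_eq_sum_range (fun c => if (r : ℕ) = c + 1 then (r : ℂ) * v c else 0)]
  obtain ⟨r, hr⟩ := r
  cases r with
  | zero => simp
  | succ k =>
    simp only [add_left_inj, Finset.sum_ite_eq, Finset.mem_range]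
    rw [if_pos (by omega)]
    rfl

/-- The truncated `r - 1` at `r = 0` and the out-of-range index `N + 1` at `r = N` are harmless:
their coefficients vanish. -/
theorem sub_mulVec_apply (v : ℕ → ℂ) (r : Fin (N + 1)) :
    ((Emat N - Fmat N) *ᵥ fun s => v s) r =
      ((N : ℂ) - r) * v (r + 1) - (r : ℂ) * v (r - 1) := by
  rw [Matrix.sub_mulVec, Pi.sub_apply, Emat_mulVec_apply, Fmat_mulVec_apply]

end Matrices

theorem Ppoly_succ (N m : ℕ) :
    Ppoly N (m + 1) = X * Ppoly N m + C ((m : ℂ) * ((N : ℂ) + 1 - m)) * Ppoly N (m - 1) := by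
  cases m with
  | zero => simp [Ppoly]
  | succ m =>
    rw [Ppoly, Nat.add_sub_cancel]
    push_cast
    ring_nf

section Factorials

variable {N r : ℕ}

theorem sub_mul_factorial_sub_succ (hr : r < N) :
    ((N : ℂ) - r) * ((N - (r + 1)).factorial : ℂ) = ((N - r).factorial : ℂ) := by
  rw [← Nat.cast_sub hr.le, ← Nat.cast_mul, ← Nat.sub_sub, Nat.mul_factorial_pred (by omega)]

theorem mul_factorial_sub_pred (hr : r ≤ N) :
    (r : ℂ) * ((N - (r - 1)).factorial : ℂ) =
      (r : ℂ) * (((N : ℂ) + 1 - r) * ((N - r).factorial : ℂ)) := by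
  rcases Nat.eq_zero_or_pos r with rfl | hr0
  · simp
  · rw [show N - (r - 1) = N - r + 1 by omega, Nat.factorial_succ]
    push_cast [Nat.cast_sub hr]
    ring

end Factorials

/-- The eigenvector without the factor `1 / N!`; by truncated subtraction its value at
`s = N + 1` is `P_{N+1}(N, λ)`. -/
def eigenCoeff (N : ℕ) (lam : ℂ) (s : ℕ) : ℂ :=
  ((N - s).factorial : ℂ) * (Ppoly N s).eval lam

theorem sub_mul_eigenCoeff_succ {N : ℕ} {lam : ℂ} (hlam : (Ppoly N (N + 1)).eval lam = 0)
    {r : ℕ} (hr : r ≤ N) :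
    ((N : ℂ) - r) * eigenCoeff N lam (r + 1) =
      ((N - r).factorial : ℂ) * (Ppoly N (r + 1)).eval lam := by
  rcases hr.lt_or_eq with hr | rfl
  · rw [eigenCoeff, ← mul_assoc, sub_mul_factorial_sub_succ hr]
  · simp [hlam]

theorem sub_mulVec_eigenCoeff {N : ℕ} {lam : ℂ} (hlam : (Ppoly N (N + 1)).eval lam = 0) :
    (Emat N - Fmat N) *ᵥ (fun s : Fin (N + 1) => eigenCoeff N lam s) =
      lam • fun s : Fin (N + 1) => eigenCoeff N lam s := by
  funext r
  have hr : (r : ℕ) ≤ N := Nat.lt_succ_iff.mp r.isLt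
  have hrec := congrArg (eval lam) (Ppoly_succ N r)
  simp only [eval_add, eval_mul, eval_X, eval_C] at hrec
  rw [sub_mulVec_apply, sub_mul_eigenCoeff_succ hlam hr, eigenCoeff, ← mul_assoc,
    mul_factorial_sub_pred hr, Pi.smul_apply, smul_eq_mul, eigenCoeff]
  linear_combination ((N - (r : ℕ)).factorial : ℂ) * hrec

theorem eigenvector_of_root_general (N : ℕ) (lam : ℂ)
    (hlam : (Ppoly N (N + 1)).eval lam = 0) :
    (Emat N - Fmat N).mulVec
        (fun s : Fin (N + 1) => ((N - (s : ℕ)).factorial : ℂ) * (Ppoly N s).eval lam /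
          (N.factorial : ℂ)) =
      lam • (fun s : Fin (N + 1) => ((N - (s : ℕ)).factorial : ℂ) * (Ppoly N s).eval lam /
          (N.factorial : ℂ)) ∧
    ((N - ((0 : Fin (N + 1)) : ℕ)).factorial : ℂ) * (Ppoly N 0).eval lam /
        (N.factorial : ℂ) = 1 := by
  have hx : (fun s : Fin (N + 1) => ((N - (s : ℕ)).factorial : ℂ) * (Ppoly N s).eval lam /
      (N.factorial : ℂ)) = (N.factorial : ℂ)⁻¹ • fun s : Fin (N + 1) => eigenCoeff N lam s := by
    funext s
    simp only [Pi.smul_apply, smul_eq_mul, eigenCoeff]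
    ring
  refine ⟨?_, ?_⟩
  · rw [hx, Matrix.mulVec_smul, sub_mulVec_eigenCoeff hlam, smul_comm]
  · simp [Ppoly, Nat.factorial_ne_zero]

/-- Lemma 1.6(b): if `P_{N+1}(N, λ) = 0` then the vector
`x(λ)_s = (N−s)!·P_s(N,λ)/N!` is the right eigenvector of `E − F` for the eigenvalue
`λ`, normalized so that `x(λ)_0 = 1`. -/
theorem eigenvector_of_root (N : ℕ) (hN : 1 ≤ N) (lam : ℂ)
    (hlam : (Ppoly N (N + 1)).eval lam = 0) :
    (Emat N - Fmat N).mulVec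
        (fun s : Fin (N + 1) => ((N - (s : ℕ)).factorial : ℂ) * (Ppoly N s).eval lam /
          (N.factorial : ℂ)) =
      lam • (fun s : Fin (N + 1) => ((N - (s : ℕ)).factorial : ℂ) * (Ppoly N s).eval lam /
          (N.factorial : ℂ)) ∧
    ((N - ((0 : Fin (N + 1)) : ℕ)).factorial : ℂ) * (Ppoly N 0).eval lam /
        (N.factorial : ℂ) = 1 :=
  eigenvector_of_root_general N lam hlam
end
end
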